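/- arXiv:1502.03382 — 3 statements merged into one kernel-verified Lean document; each statement's English description precedes it below -/
import Mathlib

section
/- The function φ(x) = ζ(x)/(x²−1) tends to 2^{−2/3} as x → 1 from the right, where ζ(x) = ( (3/4)·( x·√(x²−1) − arcosh x ) )^{2/3}. -/
open Real Filter

/-- The inverse hyperbolic cosine, `arcosh x = log (x + √(x² - 1))`. -/
noncomputable def arcosh (x : ℝ) : ℝ := Real.log (x + Real.sqrt (x ^ 2 - 1))

/-- The variable `ζ(x) = ((3/4)(x√(x²-1) - arcosh x))^{2/3}` for `x ≥ 1`. -/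
noncomputable def zeta (x : ℝ) : ℝ :=
  ((3 / 4) * (x * Real.sqrt (x ^ 2 - 1) - _root_.arcosh x)) ^ ((2 : ℝ) / 3)

/-!
With `s = √(x² - 1)`, the function `x s - arcosh x` has derivative `2 s`, while `(x² - 1)^{3/2}`
has derivative `3 x s`; both vanish at `x = 1`, so by l'Hôpital their ratio tends to `2/3`.
Hence `ζ(x)/(x² - 1) = ((3/4) · (x s - arcosh x)/(x² - 1)^{3/2})^{2/3} → (1/2)^{2/3}`.
-/

open Topology

noncomputable def zetaArg (x : ℝ) : ℝ := x * √(x ^ 2 - 1) - Real.arcosh x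

lemma zeta_eq (x : ℝ) : zeta x = ((3 / 4) * zetaArg x) ^ ((2 : ℝ) / 3) := rfl

lemma hasDerivAt_sqrt_sq_sub_one {x : ℝ} (hx : x ^ 2 ≠ 1) :
    HasDerivAt (fun y => √(y ^ 2 - 1)) (x / √(x ^ 2 - 1)) x := by
  refine ((hasDerivAt_sqrt (sub_ne_zero.2 hx)).comp x
    ((hasDerivAt_pow 2 x).sub_const 1)).congr_deriv ?_
  field_simp
  ring

lemma hasDerivAt_zetaArg {x : ℝ} (hx : 1 < x) :
    HasDerivAt zetaArg (2 * √(x ^ 2 - 1)) x := by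
  have hs : 0 < √(x ^ 2 - 1) := sqrt_pos.2 (by nlinarith)
  have hsq : √(x ^ 2 - 1) ^ 2 = x ^ 2 - 1 := sq_sqrt (by nlinarith)
  refine (((hasDerivAt_id' x).mul (hasDerivAt_sqrt_sq_sub_one (by nlinarith))).sub
    (Real.hasDerivAt_arcosh hx)).congr_deriv ?_
  field_simp
  nlinarith [hsq]

lemma continuousWithinAt_zetaArg_one : ContinuousWithinAt zetaArg (Set.Ici 1) 1 :=
  (by fun_prop : Continuous fun x : ℝ => x * √(x ^ 2 - 1)).continuousWithinAt.sub
    (continuousOn_arcosh 1 Set.self_mem_Ici)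

lemma zetaArg_one : zetaArg 1 = 0 := by
  simp [zetaArg]

lemma hasDerivAt_sq_sub_one_rpow_three_halves (x : ℝ) :
    HasDerivAt (fun y => (y ^ 2 - 1) ^ ((3 : ℝ) / 2)) (3 * x * √(x ^ 2 - 1)) x := by
  refine ((hasDerivAt_rpow_const (Or.inr (by norm_num))).comp x
    ((hasDerivAt_pow 2 x).sub_const 1)).congr_deriv ?_
  rw [sqrt_eq_rpow]
  norm_num
  ring

lemma tendsto_zetaArg_div_rpow_three_halves :
    Tendsto (fun x => zetaArg x / (x ^ 2 - 1) ^ ((3 : ℝ) / 2)) (𝓝[>] 1) (𝓝 (2 / 3)) := by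
  have hnum : Tendsto zetaArg (𝓝[>] 1) (𝓝 0) := by
    simpa [zetaArg_one] using
      (continuousWithinAt_zetaArg_one.mono Set.Ioi_subset_Ici_self).tendsto
  have hden : Tendsto (fun x : ℝ => (x ^ 2 - 1) ^ ((3 : ℝ) / 2)) (𝓝[>] 1) (𝓝 0) := by
    have := (hasDerivAt_sq_sub_one_rpow_three_halves 1).continuousAt.continuousWithinAt
      (s := Set.Ioi 1)
    simpa using this.tendsto
  have hquot : Tendsto (fun x : ℝ => 2 / (3 * x)) (𝓝[>] 1) (𝓝 (2 / 3)) := by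
    have : ContinuousAt (fun x : ℝ => 2 / (3 * x)) 1 := by fun_prop (disch := norm_num)
    simpa using this.continuousWithinAt.tendsto
  refine HasDerivAt.lhopital_zero_nhdsGT
    (eventually_nhdsWithin_of_forall fun x hx => hasDerivAt_zetaArg hx)
    (Eventually.of_forall hasDerivAt_sq_sub_one_rpow_three_halves) ?_ hnum hden
    (hquot.congr' ?_)
  all_goals filter_upwards [self_mem_nhdsWithin] with x (hx : 1 < x)
  · have : 0 < √(x ^ 2 - 1) := sqrt_pos.2 (by nlinarith)
    positivity
  · have : √(x ^ 2 - 1) ≠ 0 := (sqrt_pos.2 (by nlinarith)).ne'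
    field_simp

lemma zeta_div_sq_sub_one {x : ℝ} (hx : 0 ≤ x ^ 2 - 1) (harg : 0 ≤ zetaArg x) :
    zeta x / (x ^ 2 - 1) =
      ((3 / 4) * (zetaArg x / (x ^ 2 - 1) ^ ((3 : ℝ) / 2))) ^ ((2 : ℝ) / 3) := by
  have hcube : ((x ^ 2 - 1) ^ ((3 : ℝ) / 2)) ^ ((2 : ℝ) / 3) = x ^ 2 - 1 := by
    rw [← rpow_mul hx]
    norm_num
  rw [← mul_div_assoc, div_rpow (by positivity) (by positivity), hcube, zeta_eq]

theorem tendsto_phi_one :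
    Tendsto (fun x : ℝ => zeta x / (x ^ 2 - 1)) (nhdsWithin 1 (Set.Ioi 1))
      (nhds ((2 : ℝ) ^ (-(2 : ℝ) / 3))) := by
  have hlim := tendsto_zetaArg_div_rpow_three_halves
  have hval : ((3 : ℝ) / 4 * (2 / 3)) ^ ((2 : ℝ) / 3) = 2 ^ (-(2 : ℝ) / 3) := by
    rw [show (3 : ℝ) / 4 * (2 / 3) = 2⁻¹ by norm_num, inv_rpow zero_le_two, ← rpow_neg zero_le_two,
      neg_div]
  rw [← hval]
  refine (((continuous_const.mul continuous_id).rpow_const fun _ => Or.inr (by norm_num)).tendsto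
    _ |>.comp hlim).congr' ?_
  filter_upwards [hlim.eventually (lt_mem_nhds (by norm_num : (0 : ℝ) < 2 / 3)),
    self_mem_nhdsWithin] with x hquot (hx : 1 < x)
  have hsq : 0 < x ^ 2 - 1 := by nlinarith
  have harg : 0 < zetaArg x := (div_pos_iff_of_pos_right (rpow_pos_of_pos hsq _)).1 hquot
  exact (zeta_div_sq_sub_one hsq.le harg.le).symm
end

section
/- As x → 1 from the right, ( x − 1 − 2^{−1/3}·ζ(x) ) / ζ(x)² tends to −2^{−2/3}/10, where ζ(x) = ( (3/4)·( x·√(x²−1) − arcosh x ) )^{2/3}. That is, the inversion of ζ as a function of x begins x = 1 + 2^{−1/3}ζ − (2^{−2/3}/10)ζ² + ⋯ . -/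
open Real Filter

/-!
Write `ζ^{3/2} = √2 (x - 1)^{3/2} ψ(x)`, so that `ζ = 2^{1/3} (x - 1) ψ^{2/3}` and
`(x - 1 - 2^{-1/3} ζ) / ζ² = -((ψ^{2/3} - 1) / (x - 1)) / (2^{1/3} ψ^{2/3})²`.
Since `(ζ^{3/2})' = (3/2)√(x² - 1)`, L'Hôpital's rule gives
`ψ(x) = 1 + (3/20)(x - 1) + o(x - 1)`, hence `ψ^{2/3} = 1 + (1/10)(x - 1) + o(x - 1)`, and the
quotient tends to `-2^{-2/3}/10`.
-/

open Set Topology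

theorem HasDerivAt.tendsto_comp_sub_div {𝕜 α : Type*} [NontriviallyNormedField 𝕜]
    {f : 𝕜 → 𝕜} {f' a L : 𝕜} {u v : α → 𝕜} {l : Filter α} (hf : HasDerivAt f f' a)
    (hu : Tendsto u l (𝓝 a)) (huv : Tendsto (fun x => (u x - a) / v x) l (𝓝 L)) :
    Tendsto (fun x => (f (u x) - f a) / v x) l (𝓝 (f' * L)) := by
  have hslope := (continuousAt_dslope_same.2 hf.differentiableAt).tendsto.comp hu
  rw [dslope_same, hf.deriv] at hslope
  refine (hslope.mul huv).congr fun x => ?_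
  rw [Function.comp_apply, ← sub_smul_dslope f a (u x), smul_eq_mul]
  ring

/-- `ζ^{3/2}`; the `arcosh` of `zeta` unfolds to Mathlib's `Real.arcosh`. -/
noncomputable def zetaThreeHalves (x : ℝ) : ℝ := 3 / 4 * (x * √(x ^ 2 - 1) - Real.arcosh x)

theorem zeta_eq_zetaThreeHalves_rpow (x : ℝ) : zeta x = zetaThreeHalves x ^ (2 / 3 : ℝ) := rfl

theorem hasDerivAt_zetaThreeHalves {x : ℝ} (hx : 1 < x) :
    HasDerivAt zetaThreeHalves (3 / 2 * √(x ^ 2 - 1)) x := by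
  have hpos : 0 < x ^ 2 - 1 := by nlinarith
  have hsqrt : HasDerivAt (fun y => √(y ^ 2 - 1)) (2 * x / (2 * √(x ^ 2 - 1))) x :=
    (((hasDerivAt_pow 2 x).sub_const 1).sqrt hpos.ne').congr_deriv (by ring)
  refine ((((hasDerivAt_id' x).mul hsqrt).sub (hasDerivAt_arcosh hx)).const_mul
    (3 / 4)).congr_deriv ?_
  have : √(x ^ 2 - 1) ≠ 0 := (sqrt_pos.2 hpos).ne'
  field_simp
  linear_combination (-2) * sq_sqrt hpos.le

theorem tendsto_zetaThreeHalves_one : Tendsto zetaThreeHalves (𝓝 1) (𝓝 0) := by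
  have hcont : ContinuousAt zetaThreeHalves 1 := by
    unfold zetaThreeHalves Real.arcosh
    fun_prop (disch := norm_num)
  simpa [zetaThreeHalves] using hcont.tendsto

theorem hasDerivAt_pow_mul_sqrt (n : ℕ) {t : ℝ} (ht : 0 < t) :
    HasDerivAt (fun s => s ^ n * √s) ((n + 1 / 2) * t ^ n / √t) t := by
  have hs : √t ≠ 0 := (sqrt_pos.2 ht).ne'
  refine ((hasDerivAt_pow n t).mul (hasDerivAt_sqrt ht.ne')).congr_deriv ?_
  rcases n with _ | n
  · simp [div_eq_inv_mul]
  · field_simp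
    rw [sq_sqrt ht.le]
    push_cast
    ring

theorem sqrt_sq_sub_one {x : ℝ} (hx : 1 ≤ x) : √(x ^ 2 - 1) = √(x - 1) * √(x + 1) := by
  rw [← sqrt_mul (by linarith)]
  ring_nf

/-- The factor `ψ` in `ζ^{3/2} = √2 (x - 1)^{3/2} ψ(x)`. -/
noncomputable def zetaRatio (x : ℝ) : ℝ := zetaThreeHalves x / (√2 * ((x - 1) * √(x - 1)))

theorem tendsto_zetaThreeHalves_sub_div :
    Tendsto (fun x => (zetaThreeHalves x - √2 * ((x - 1) * √(x - 1))) /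
      (√2 * ((x - 1) ^ 2 * √(x - 1)))) (𝓝[>] 1) (𝓝 (3 / 20)) := by
  have hlim :
      Tendsto (fun x : ℝ => 3 / (5 * √2 * (√(x + 1) + √2))) (𝓝[>] 1) (𝓝 (3 / 20)) := by
    have hcont : Continuous fun x : ℝ => 3 / (5 * √2 * (√(x + 1) + √2)) :=
      continuous_const.div (by fun_prop) fun x => by positivity
    convert hcont.continuousWithinAt.tendsto using 2
    norm_num [← two_mul, mul_mul_mul_comm]
  have hpow_mul_sqrt (n : ℕ) :
      Tendsto (fun x : ℝ => √2 * ((x - 1) ^ n * √(x - 1))) (𝓝[>] 1) (𝓝 0) :=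
    ((by fun_prop : Continuous fun x : ℝ => √2 * ((x - 1) ^ n * √(x - 1))).tendsto' 1 0
      (by simp)).mono_left nhdsWithin_le_nhds
  have hderiv (n : ℕ) {x : ℝ} (hx : x ∈ Ioo (1 : ℝ) 2) :=
    ((hasDerivAt_pow_mul_sqrt n (sub_pos.2 hx.1)).comp_sub_const x 1).const_mul √2
  have hnum :
      Tendsto (fun x => zetaThreeHalves x - √2 * ((x - 1) * √(x - 1))) (𝓝[>] 1) (𝓝 0) := by
    simpa using (tendsto_zetaThreeHalves_one.mono_left nhdsWithin_le_nhds).sub (hpow_mul_sqrt 1)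
  refine HasDerivAt.lhopital_zero_right_on_Ioo one_lt_two
    (fun x hx => (hasDerivAt_zetaThreeHalves hx.1).sub (by simpa using hderiv 1 hx))
    (fun x hx => hderiv 2 hx) (fun x hx => by have := sub_pos.2 hx.1; positivity)
    hnum (hpow_mul_sqrt 2) (hlim.congr' ?_)
  -- rationalize `√(x + 1) - √2`
  filter_upwards [self_mem_nhdsWithin] with x (hx : 1 < x)
  have ht : 0 < √(x - 1) := sqrt_pos.2 (sub_pos.2 hx)
  have h2 : 0 < √2 := by positivity
  have hx1 : 0 < √(x + 1) := sqrt_pos.2 (by linarith)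
  rw [sqrt_sq_sub_one hx.le]
  field_simp
  rw [eq_div_iff (by positivity), sq_sqrt (sub_pos.2 hx).le]
  linear_combination (-15 * (x - 1)) * sq_sqrt (by linarith : (0 : ℝ) ≤ x + 1) +
    15 * (x - 1) * sq_sqrt (by norm_num : (0 : ℝ) ≤ 2)

theorem tendsto_zetaRatio_sub_one_div :
    Tendsto (fun x => (zetaRatio x - 1) / (x - 1)) (𝓝[>] 1) (𝓝 (3 / 20)) := by
  refine tendsto_zetaThreeHalves_sub_div.congr' ?_
  filter_upwards [self_mem_nhdsWithin] with x (hx : 1 < x)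
  have : 0 < √(x - 1) := sqrt_pos.2 (sub_pos.2 hx)
  have : x - 1 ≠ 0 := (sub_pos.2 hx).ne'
  rw [zetaRatio]
  field_simp

theorem tendsto_zetaRatio : Tendsto zetaRatio (𝓝[>] 1) (𝓝 1) := by
  have hsub : Tendsto (fun x : ℝ => x - 1) (𝓝[>] 1) (𝓝 0) :=
    ((continuous_sub_right 1).tendsto' 1 0 (sub_self 1)).mono_left nhdsWithin_le_nhds
  have h := (tendsto_zetaRatio_sub_one_div.mul hsub).add_const 1
  rw [mul_zero, zero_add] at h
  refine h.congr' ?_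
  filter_upwards [self_mem_nhdsWithin] with x (hx : 1 < x)
  rw [div_mul_cancel₀ _ (sub_pos.2 hx).ne', sub_add_cancel]

theorem zeta_eq_mul_zetaRatio_rpow {x : ℝ} (hx : 1 < x) (hψ : 0 ≤ zetaRatio x) :
    zeta x = 2 ^ (1 / 3 : ℝ) * (x - 1) * zetaRatio x ^ (2 / 3 : ℝ) := by
  have ht : 0 < x - 1 := sub_pos.2 hx
  have h32 : (x - 1) * √(x - 1) = (x - 1) ^ (3 / 2 : ℝ) := by
    rw [sqrt_eq_rpow, ← rpow_one_add' ht.le (by norm_num)]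
    norm_num
  have hsplit : zetaThreeHalves x = √2 * (x - 1) ^ (3 / 2 : ℝ) * zetaRatio x := by
    rw [← h32, zetaRatio, mul_div_cancel₀ _ (by positivity)]
  rw [zeta_eq_zetaThreeHalves_rpow, hsplit, mul_rpow (by positivity) hψ,
    mul_rpow (by positivity) (by positivity), sqrt_eq_rpow, ← rpow_mul (by norm_num),
    ← rpow_mul ht.le]
  norm_num

theorem inversion_quotient_eq {x : ℝ} (hx : 1 < x) (hψ : 0 < zetaRatio x) :
    (x - 1 - (2 : ℝ) ^ (-(1 : ℝ) / 3) * zeta x) / zeta x ^ 2 =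
      -((zetaRatio x ^ (2 / 3 : ℝ) - 1) / (x - 1)) /
        (2 ^ (1 / 3 : ℝ) * zetaRatio x ^ (2 / 3 : ℝ)) ^ 2 := by
  have : 0 < zetaRatio x ^ (2 / 3 : ℝ) := rpow_pos_of_pos hψ _
  have : x - 1 ≠ 0 := (sub_pos.2 hx).ne'
  rw [zeta_eq_mul_zetaRatio_rpow hx hψ.le, show (-1 : ℝ) / 3 = -(1 / 3) by norm_num,
    rpow_neg (by norm_num)]
  field_simp
  ring

theorem tendsto_inversion_coeff_two :
    Tendsto (fun x : ℝ => (x - 1 - (2 : ℝ) ^ (-(1 : ℝ) / 3) * zeta x) / zeta x ^ 2)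
      (nhdsWithin 1 (Set.Ioi 1)) (nhds (-(2 : ℝ) ^ (-(2 : ℝ) / 3) / 10)) := by
  have hpow : Tendsto (fun x => (zetaRatio x ^ (2 / 3 : ℝ) - 1) / (x - 1)) (𝓝[>] 1)
      (𝓝 (2 / 3 * (3 / 20))) := by
    simpa using HasDerivAt.tendsto_comp_sub_div
      (hasDerivAt_rpow_const (x := 1) (p := 2 / 3) (Or.inl one_ne_zero))
      tendsto_zetaRatio tendsto_zetaRatio_sub_one_div
  have hden : Tendsto (fun x => (2 ^ (1 / 3 : ℝ) * zetaRatio x ^ (2 / 3 : ℝ)) ^ 2) (𝓝[>] 1)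
      (𝓝 ((2 ^ (1 / 3 : ℝ) * 1) ^ 2)) := by
    simpa using ((tendsto_zetaRatio.rpow_const (Or.inl one_ne_zero)).const_mul _).pow 2
  have hval :
      -(2 / 3 * (3 / 20)) / (2 ^ (1 / 3 : ℝ) * 1) ^ 2 = -(2 : ℝ) ^ (-(2 : ℝ) / 3) / 10 := by
    rw [mul_one, ← rpow_natCast, ← rpow_mul (by norm_num),
      show -(2 : ℝ) / 3 = -(1 / 3 * (2 : ℕ)) by norm_num, rpow_neg (by norm_num)]
    ring
  refine hval ▸ (hpow.neg.div hden (by positivity)).congr' ?_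
  filter_upwards [self_mem_nhdsWithin, tendsto_zetaRatio.eventually (lt_mem_nhds one_pos)]
    with x (hx : 1 < x) hψ
  exact (inversion_quotient_eq hx hψ).symm
end

section
/- As x → 1 from the right, ( φ(x)·b₀(x) + (9/280)·2^{−1/3} ) / ζ(x) tends to (179/6300)·2^{−2/3}, where φ(x) = ζ(x)/(x²−1), b₀(x) = −(1/(2·ζ(x)^{1/2}))·( x(x²−6)/(12(x²−1)^{3/2}) + 5/(24·ζ(x)^{3/2}) ), and ζ(x) = ( (3/4)·( x·√(x²−1) − arcosh x ) )^{2/3}. That is, in the expansion φ·b₀ = −(β₀ + β₁ζ + ⋯) one has β₁ = −(179/6300)·2^{−2/3}. -/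
open Real Filter

/-- The function `φ(x) = ζ(x)/(x² - 1)`. -/
noncomputable def phi (x : ℝ) : ℝ := zeta x / (x ^ 2 - 1)

/-- The coefficient function
`b₀(x) = -(1/(2ζ^{1/2}))·(x(x²-6)/(12(x²-1)^{3/2}) + 5/(24ζ^{3/2}))`. -/
noncomputable def b0 (x : ℝ) : ℝ :=
  -(1 / (2 * zeta x ^ ((1 : ℝ) / 2))) *
    (x * (x ^ 2 - 6) / (12 * (x ^ 2 - 1) ^ ((3 : ℝ) / 2)) +
      5 / (24 * zeta x ^ ((3 : ℝ) / 2)))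

/-!
Put `x = cosh t` with `t → 0⁺`. Then `√(x² - 1) = sinh t`, `arcosh x = t`,
`ζ^{3/2} = (3/4)(cosh t sinh t - t)`, and clearing denominators gives
`(φ b₀ + c₀) / ζ = (N(t) + 48 c₀ sinh⁵ t · ζ) / (48 sinh⁵ t · ζ²)` with `c₀ = (9/280) 2^{-1/3}` and
`N = phiMulB0Num` elementary. Since `2 ζ^{3/2} / t³ = 1 + t²/5 + O(t⁴)`, a first-order expansion of
`y ↦ y^{2/3}` at `1` gives `Z := 2^{2/3} ζ = t² + (2/15) t⁴ + o(t⁴)`. As `48 c₀ ζ = (27/35) Z`, the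
numerator is `N + (27/35 t² + 18/175 t⁴) sinh⁵ t + o(t⁹) = (179/525) t⁹ + o(t⁹)`, while the
denominator is `~ 48 · 2^{-4/3} t⁹`.
-/

open Asymptotics Topology Finset

lemma abs_sub_sum_range_le_of_hasSum {f g : ℕ → ℝ} {a b C : ℝ} (n : ℕ) (hf : HasSum f a)
    (hg : HasSum g b) (hfg : ∀ i, |f (i + n)| ≤ C * g i) :
    |a - ∑ i ∈ range n, f i| ≤ C * b :=
  ((hasSum_nat_add_iff' n).mpr hf).norm_le_of_bounded (hg.mul_left C) hfg

noncomputable def sinhTaylorRem (n : ℕ) (x : ℝ) : ℝ :=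
  sinh x - ∑ i ∈ range n, x ^ (2 * i + 1) / (2 * i + 1).factorial

noncomputable def coshTaylorRem (n : ℕ) (x : ℝ) : ℝ :=
  cosh x - ∑ i ∈ range n, x ^ (2 * i) / (2 * i).factorial

lemma abs_sinhTaylorRem_le (n : ℕ) (x : ℝ) :
    |sinhTaylorRem n x| ≤ |x| ^ (2 * n + 1) * cosh x := by
  refine abs_sub_sum_range_le_of_hasSum n (hasSum_sinh x) (hasSum_cosh x) fun i => ?_
  rw [abs_div, Nat.abs_cast, abs_pow, show 2 * (i + n) + 1 = 2 * n + 1 + 2 * i by ring, pow_add,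
    mul_div_assoc, ← abs_pow, ← pow_abs, Even.pow_abs ⟨i, two_mul i⟩]
  gcongr
  · exact Even.pow_nonneg ⟨i, two_mul i⟩ x
  · omega

lemma abs_coshTaylorRem_le (n : ℕ) (x : ℝ) :
    |coshTaylorRem n x| ≤ |x| ^ (2 * n) * cosh x := by
  refine abs_sub_sum_range_le_of_hasSum n (hasSum_cosh x) (hasSum_cosh x) fun i => ?_
  rw [abs_div, Nat.abs_cast, abs_pow, show 2 * (i + n) = 2 * n + 2 * i by ring, pow_add,
    mul_div_assoc, Even.pow_abs ⟨i, two_mul i⟩]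
  gcongr
  · exact Even.pow_nonneg ⟨i, two_mul i⟩ x
  · omega

lemma isBigO_comp_mul_of_abs_le_pow_mul_cosh {f : ℝ → ℝ} {m : ℕ}
    (hf : ∀ x, |f x| ≤ |x| ^ m * cosh x) (k : ℝ) :
    (fun t => f (k * t)) =O[𝓝 0] (· ^ m) := by
  refine IsBigO.of_bound (|k| ^ m * cosh k) ?_
  filter_upwards [Metric.closedBall_mem_nhds (0 : ℝ) one_pos] with t ht
  rw [Metric.mem_closedBall, dist_zero_right, Real.norm_eq_abs] at ht
  have hkt : |k * t| ≤ |k| := by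
    rw [abs_mul]; exact mul_le_of_le_one_right (abs_nonneg k) ht
  calc ‖f (k * t)‖ ≤ |k * t| ^ m * cosh (k * t) := hf _
    _ ≤ |k| ^ m * |t| ^ m * cosh k := by
      rw [abs_mul, mul_pow]; gcongr; exact Real.cosh_le_cosh.mpr hkt
    _ = |k| ^ m * cosh k * ‖t ^ m‖ := by rw [norm_pow, Real.norm_eq_abs]; ring

lemma sinhTaylorRem_comp_mul_isBigO (n : ℕ) (k : ℝ) :
    (fun t => sinhTaylorRem n (k * t)) =O[𝓝 0] (· ^ (2 * n + 1)) :=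
  isBigO_comp_mul_of_abs_le_pow_mul_cosh (abs_sinhTaylorRem_le n) k

lemma coshTaylorRem_comp_mul_isBigO (n : ℕ) (k : ℝ) :
    (fun t => coshTaylorRem n (k * t)) =O[𝓝 0] (· ^ (2 * n)) :=
  isBigO_comp_mul_of_abs_le_pow_mul_cosh (abs_coshTaylorRem_le n) k

lemma Real.sinh_isEquivalent_id : sinh ~[𝓝 0] id := by
  have h : (fun t => sinh t - t) =O[𝓝 0] (· ^ 3) := by
    simpa [sinhTaylorRem] using sinhTaylorRem_comp_mul_isBigO 1 1
  exact (h.trans_isLittleO (isLittleO_pow_id (by norm_num))).isEquivalent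

lemma Asymptotics.IsBigO.pow_mul {𝕜 : Type*} [NormedField 𝕜] {l : Filter 𝕜} {f : 𝕜 → 𝕜} {m : ℕ}
    (h : f =O[l] (· ^ m)) (j : ℕ) : (fun t => t ^ j * f t) =O[l] (· ^ (j + m)) := by
  simpa only [pow_add] using (isBigO_refl (· ^ j) l).mul h

lemma Real.sinh_five_mul (x : ℝ) :
    sinh (5 * x) = 16 * sinh x ^ 5 + 20 * sinh x ^ 3 + 5 * sinh x := by
  rw [show 5 * x = 2 * x + 3 * x by ring, sinh_add, sinh_two_mul, cosh_two_mul, sinh_three_mul,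
    cosh_three_mul]
  linear_combination (8 * sinh x * cosh x ^ 2 + 12 * sinh x ^ 3 + 5 * sinh x) * cosh_sq x

noncomputable def phiMulB0Num (t : ℝ) : ℝ :=
  -(3 / 2) * cosh t * (cosh t ^ 2 - 6) * (cosh t * sinh t - t) - 5 * sinh t ^ 3

/- Product-to-sum formulas: `c (c² - 6) = (cosh 3t - 21 c) / 4`, `c s - t = sinh 2t / 2 - t`,
`s³ = (sinh 3t - 3 s) / 4` and `s⁵ = (sinh 5t - 5 sinh 3t + 10 s) / 16`. The truncation orders are
chosen so that every Taylor polynomial stops at degree `9`, where they sum to `179/525 t⁹`. -/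
lemma phiMulB0Num_eq_sum_taylorRem (t : ℝ) :
    phiMulB0Num t + (27 / 35 * t ^ 2 + 18 / 175 * t ^ 4) * sinh t ^ 5 - 179 / 525 * t ^ 9 =
      (-(3 / 32) * sinhTaylorRem 5 (5 * t) + 23 / 32 * sinhTaylorRem 5 (3 * t)
          + 93 / 16 * sinhTaylorRem 5 t)
        + (3 / 8 * (t * coshTaylorRem 5 (3 * t)) - 63 / 8 * (t * coshTaylorRem 5 t))
        + 27 / 560 * (t ^ 2 * sinhTaylorRem 4 (5 * t) - 5 * (t ^ 2 * sinhTaylorRem 4 (3 * t))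
          + 10 * (t ^ 2 * sinhTaylorRem 4 t))
        + 9 / 1400 * (t ^ 4 * sinhTaylorRem 3 (5 * t) - 5 * (t ^ 4 * sinhTaylorRem 3 (3 * t))
          + 10 * (t ^ 4 * sinhTaylorRem 3 t)) := by
  simp only [phiMulB0Num, sinhTaylorRem, coshTaylorRem, sum_range_succ, sum_range_zero,
    sinh_five_mul, sinh_three_mul, cosh_three_mul]
  norm_num [Nat.factorial]
  linear_combination (-(3 / 2) * sinh t * (cosh t ^ 2 + sinh t ^ 2 - 5)) * cosh_sq t

lemma phiMulB0Num_add_isBigO :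
    (fun t => phiMulB0Num t + (27 / 35 * t ^ 2 + 18 / 175 * t ^ 4) * sinh t ^ 5
      - 179 / 525 * t ^ 9) =O[𝓝 0] (· ^ 11) := by
  have hS (n : ℕ) (k : ℝ) := sinhTaylorRem_comp_mul_isBigO n k
  have hS₁ (n : ℕ) : sinhTaylorRem n =O[𝓝 0] (· ^ (2 * n + 1)) := by simpa using hS n 1
  have hC (k : ℝ) : (fun t => t * coshTaylorRem 5 (k * t)) =O[𝓝 0] (· ^ 11) := by
    simpa using (coshTaylorRem_comp_mul_isBigO 5 k).pow_mul 1
  have hC₁ : (fun t => t * coshTaylorRem 5 t) =O[𝓝 0] (· ^ 11) := by simpa using hC 1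
  simp only [phiMulB0Num_eq_sum_taylorRem]
  refine ((((hS 5 5).const_mul_left _).add ((hS 5 3).const_mul_left _)).add
    ((hS₁ 5).const_mul_left _)).add ?_ |>.add ?_ |>.add ?_
  · exact ((hC 3).const_mul_left _).sub (hC₁.const_mul_left _)
  · exact ((((hS 4 5).pow_mul 2).sub (((hS 4 3).pow_mul 2).const_mul_left _)).add
      (((hS₁ 4).pow_mul 2).const_mul_left _)).const_mul_left _
  · exact ((((hS 3 5).pow_mul 4).sub (((hS 3 3).pow_mul 4).const_mul_left _)).add
      (((hS₁ 3).pow_mul 4).const_mul_left _)).const_mul_left _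

lemma self_lt_cosh_mul_sinh {t : ℝ} (ht : 0 < t) : t < cosh t * sinh t := by
  have hs : t < sinh t := Real.self_lt_sinh_iff.mpr ht
  nlinarith [Real.one_le_cosh t]

lemma zeta_cosh {t : ℝ} (ht : 0 ≤ t) :
    zeta (cosh t) = (3 / 4 * (cosh t * sinh t - t)) ^ ((2 : ℝ) / 3) := by
  have hs : √(cosh t ^ 2 - 1) = sinh t := by
    rw [cosh_sq, add_sub_cancel_right, Real.sqrt_sq (sinh_nonneg_iff.mpr ht)]
  rw [zeta, hs, show _root_.arcosh (cosh t) = t from Real.arcosh_cosh ht]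

lemma phi_mul_b0_cosh {t : ℝ} (ht : 0 < t) :
    phi (cosh t) * b0 (cosh t) = phiMulB0Num t / (48 * sinh t ^ 5 * zeta (cosh t)) := by
  set F := 3 / 4 * (cosh t * sinh t - t)
  have hF : 0 < F := by have := self_lt_cosh_mul_sinh ht; positivity
  set v := F ^ ((1 : ℝ) / 3)
  have hv : 0 < v := by positivity
  have hs : 0 < sinh t := sinh_pos_iff.mpr ht
  have hz : zeta (cosh t) = v ^ 2 := by
    rw [zeta_cosh ht.le, ← rpow_mul_natCast hF.le]; norm_num [F]
  have hz_rpow (n : ℕ) : zeta (cosh t) ^ ((n : ℝ) / 2) = v ^ n := by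
    rw [hz, ← rpow_natCast, ← rpow_mul hv.le, ← rpow_natCast]; congr 1; push_cast; ring
  have hF3 : cosh t * sinh t - t = 4 / 3 * v ^ 3 := by
    rw [← rpow_mul_natCast hF.le]; norm_num [F]; ring
  have hc : cosh t ^ 2 - 1 = sinh t ^ 2 := by rw [cosh_sq]; ring
  have hs3 : (cosh t ^ 2 - 1) ^ ((3 : ℝ) / 2) = sinh t ^ 3 := by
    rw [hc, ← rpow_natCast, ← rpow_mul hs.le, ← rpow_natCast]; norm_num
  rw [phi, b0, hs3, hc, show ((1 : ℝ) / 2) = ((1 : ℕ) : ℝ) / 2 by norm_num,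
    show ((3 : ℝ) / 2) = ((3 : ℕ) : ℝ) / 2 by norm_num, hz_rpow, hz_rpow, hz, phiMulB0Num, hF3]
  field_simp
  ring

lemma cosh_mul_sinh_sub_self_div_isBigO :
    (fun t => 3 / 2 * (cosh t * sinh t - t) / t ^ 3 - 1 - t ^ 2 / 5) =O[𝓝[>] 0] (· ^ 4) := by
  have h := (((sinhTaylorRem_comp_mul_isBigO 3 2).const_mul_left (3 / 4)).mul
    (isBigO_refl (fun t : ℝ => (t ^ 3)⁻¹) _)).mono (nhdsWithin_le_nhds (s := Set.Ioi 0))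
  refine h.congr' ?_ ?_ <;> filter_upwards [self_mem_nhdsWithin] with t (ht : 0 < t)
  · simp only [sinhTaylorRem, sum_range_succ, sum_range_zero, sinh_two_mul]
    field_simp
    norm_num [Nat.factorial]
    ring
  · field_simp

lemma two_rpow_mul_zeta_cosh_isLittleO :
    (fun t => 2 ^ ((2 : ℝ) / 3) * zeta (cosh t) - t ^ 2 - 2 / 15 * t ^ 4)
      =o[𝓝[>] 0] (· ^ 4) := by
  set u : ℝ → ℝ := fun t => 3 / 2 * (cosh t * sinh t - t) / t ^ 3
  have hu : (fun t => u t - 1 - t ^ 2 / 5) =O[𝓝[>] 0] (· ^ 4) := cosh_mul_sinh_sub_self_div_isBigO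
  have h42 : (fun t : ℝ => t ^ 4) =o[𝓝[>] 0] (· ^ 2) :=
    (isLittleO_pow_pow (by norm_num : 2 < 4)).mono nhdsWithin_le_nhds
  have hu₁ : (fun t => u t - 1) =O[𝓝[>] 0] (· ^ 2) :=
    ((hu.trans h42.isBigO).add ((isBigO_refl (· ^ 2) _).const_mul_left (1 / 5))).congr_left
      fun t => by ring
  have hu_tendsto : Tendsto u (𝓝[>] 0) (𝓝 1) := by
    have h : Tendsto (fun t : ℝ => t ^ 2) (𝓝[>] 0) (𝓝 0) :=
      ((continuous_pow 2).tendsto' 0 0 (by norm_num)).mono_left nhdsWithin_le_nhds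
    simpa using (hu₁.trans_tendsto h).add_const 1
  have hd : (fun y : ℝ => y ^ ((2 : ℝ) / 3) - 1 - 2 / 3 * (y - 1)) =o[𝓝 1] (fun y => y - 1) := by
    simpa [mul_comm] using
      (hasDerivAt_rpow_const (x := 1) (p := 2 / 3) (Or.inl one_ne_zero)).isLittleO
  have h2 : (fun t => u t ^ ((2 : ℝ) / 3) - 1 - 2 / 15 * t ^ 2) =o[𝓝[>] 0] (· ^ 2) :=
    (((hd.comp_tendsto hu_tendsto).trans_isBigO hu₁).add
      ((hu.const_mul_left (2 / 3)).trans_isLittleO h42)).congr_left fun t => by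
        simp only [Function.comp_apply]; ring
  refine ((isBigO_refl (· ^ 2) _).mul_isLittleO h2).congr' ?_ ?_ <;>
    filter_upwards [self_mem_nhdsWithin] with t (ht : 0 < t)
  · have hF : 0 < cosh t * sinh t - t := sub_pos.mpr (self_lt_cosh_mul_sinh ht)
    have hU : 2 ^ ((2 : ℝ) / 3) * zeta (cosh t) = t ^ 2 * u t ^ ((2 : ℝ) / 3) := by
      rw [zeta_cosh ht.le, ← mul_rpow (by norm_num) (by positivity),
        show 2 * (3 / 4 * (cosh t * sinh t - t)) = t ^ 3 * u t by simp only [u]; field_simp; ring,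
        mul_rpow (by positivity) (by positivity), ← rpow_natCast, ← rpow_mul ht.le]
      norm_num
    rw [hU]
    ring
  · ring

lemma tendsto_phiMulB0Num_div {Z : ℝ → ℝ}
    (hZ : (fun t => Z t - t ^ 2 - 2 / 15 * t ^ 4) =o[𝓝[>] 0] (· ^ 4)) :
    Tendsto (fun t => (phiMulB0Num t + 27 / 35 * sinh t ^ 5 * Z t) / (48 * sinh t ^ 5 * Z t ^ 2))
      (𝓝[>] 0) (𝓝 (179 / 25200)) := by
  have h42 : (fun t : ℝ => t ^ 4) =o[𝓝[>] 0] (· ^ 2) :=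
    (isLittleO_pow_pow (by norm_num : 2 < 4)).mono nhdsWithin_le_nhds
  have hs : sinh ~[𝓝[>] 0] id := sinh_isEquivalent_id.mono nhdsWithin_le_nhds
  have hZ₂ : Z ~[𝓝[>] 0] (· ^ 2) :=
    IsLittleO.isEquivalent <| ((hZ.trans h42).add (h42.const_mul_left (2 / 15))).congr_left
      fun t => by simp only [Pi.sub_apply]; ring
  have hnum : (fun t => phiMulB0Num t + 27 / 35 * sinh t ^ 5 * Z t) ~[𝓝[>] 0]
      (fun t => 179 / 525 * t ^ 9) := by
    have h9 : (fun t : ℝ => t ^ 11) =o[𝓝[>] 0] (· ^ 9) :=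
      (isLittleO_pow_pow (by norm_num : 9 < 11)).mono nhdsWithin_le_nhds
    have hR : (fun t => 27 / 35 * sinh t ^ 5 * (Z t - t ^ 2 - 2 / 15 * t ^ 4)) =o[𝓝[>] 0] (· ^ 9) :=
      (((hs.isBigO.pow 5).const_mul_left (27 / 35)).mul_isLittleO hZ).congr_right fun t => by
        simp only [id]; ring
    have hM := (phiMulB0Num_add_isBigO.mono nhdsWithin_le_nhds).trans_isLittleO h9
    refine IsLittleO.isEquivalent <| ((hM.add hR).trans_isBigO
      (isBigO_self_const_mul (by norm_num : (179 / 525 : ℝ) ≠ 0) _ _)).congr_left fun t => ?_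
    simp only [Pi.sub_apply]
    ring
  have hden : (fun t => 48 * sinh t ^ 5 * Z t ^ 2) ~[𝓝[>] 0] (fun t => 48 * t ^ 5 * (t ^ 2) ^ 2) :=
    (IsEquivalent.refl.mul (hs.pow 5)).mul (hZ₂.pow 2)
  refine (hnum.div hden).symm.tendsto_nhds (tendsto_const_nhds.congr' ?_)
  filter_upwards [self_mem_nhdsWithin] with t (ht : 0 < t)
  simp only [Pi.div_apply]
  field_simp
  norm_num

lemma tendsto_cosh_phi_mul_b0 :
    Tendsto (fun t => (phi (cosh t) * b0 (cosh t) + 9 / 280 * (2 : ℝ) ^ (-(1 : ℝ) / 3))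
      / zeta (cosh t)) (𝓝[>] 0) (𝓝 (179 / 6300 * (2 : ℝ) ^ (-(2 : ℝ) / 3))) := by
  set ω : ℝ := 2 ^ ((1 : ℝ) / 3)
  have hω : 0 < ω := by positivity
  have hω3 : ω ^ 3 = 2 := by rw [← rpow_mul_natCast zero_le_two]; norm_num
  have h23 : (2 : ℝ) ^ ((2 : ℝ) / 3) = ω ^ 2 := by rw [← rpow_mul_natCast zero_le_two]; norm_num
  have hm13 : (2 : ℝ) ^ (-(1 : ℝ) / 3) = ω⁻¹ := by rw [neg_div, rpow_neg zero_le_two]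
  have hm23 : (2 : ℝ) ^ (-(2 : ℝ) / 3) = (ω ^ 2)⁻¹ := by rw [neg_div, rpow_neg zero_le_two, h23]
  have h := (tendsto_phiMulB0Num_div two_rpow_mul_zeta_cosh_isLittleO).const_mul (ω ^ 4)
  rw [show 179 / 6300 * (2 : ℝ) ^ (-(2 : ℝ) / 3) = ω ^ 4 * (179 / 25200) by
    rw [hm23]; field_simp; linear_combination -6300 * (ω ^ 3 + 2) * hω3]
  refine h.congr' ?_
  filter_upwards [self_mem_nhdsWithin] with t (ht : 0 < t)
  have hs : 0 < sinh t := sinh_pos_iff.mpr ht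
  have hz : 0 < zeta (cosh t) := by
    rw [zeta_cosh ht.le]
    have := self_lt_cosh_mul_sinh ht
    positivity
  rw [phi_mul_b0_cosh ht, hm13, h23]
  field_simp
  linear_combination 7560 * sinh t ^ 5 * zeta (cosh t) * hω3

lemma Real.tendsto_arcosh_nhdsGT_one : Tendsto Real.arcosh (𝓝[>] 1) (𝓝[>] 0) := by
  refine tendsto_nhdsWithin_iff.mpr
    ⟨?_, eventually_nhdsWithin_of_forall fun x hx => Real.arcosh_pos hx⟩
  simpa using ((Real.continuousOn_arcosh 1 Set.self_mem_Ici).tendsto).mono_left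
    (nhdsWithin_mono _ Set.Ioi_subset_Ici_self)

theorem tendsto_phi_mul_b0_coeff_one :
    Tendsto (fun x : ℝ =>
        (phi x * b0 x + (9 / 280) * (2 : ℝ) ^ (-(1 : ℝ) / 3)) / zeta x)
      (nhdsWithin 1 (Set.Ioi 1))
      (nhds ((179 / 6300) * (2 : ℝ) ^ (-(2 : ℝ) / 3))) := by
  refine (tendsto_cosh_phi_mul_b0.comp Real.tendsto_arcosh_nhdsGT_one).congr' ?_
  filter_upwards [self_mem_nhdsWithin] with x (hx : 1 < x)
  simp only [Function.comp_apply, Real.cosh_arcosh hx.le]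
end
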